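/- Let M > 0 and let f = h + conj∘g ∈ 𝓑_{H_n^0}(M). Then for every z ∈ 𝔻ⁿ and every k = 1,…,n, |∂h/∂z_k(z)| + |∂g/∂z_k(z)| ≤ 1 + n·M·‖z‖_∞ and |∂h/∂z_k(z)| − |∂g/∂z_k(z)| ≥ 1 − n·M·‖z‖_∞. (Derivative estimates (2.18) from the proof of Theorem 2.8.) -/

import Mathlib

open Complex Finset

noncomputable def pder {n : ℕ} (f : (Fin n → ℂ) → ℂ) (z : Fin n → ℂ) (j : Fin n) : ℂ :=
  fderiv ℂ f z (Pi.single j 1)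

noncomputable def pder2 {n : ℕ} (f : (Fin n → ℂ) → ℂ) (z : Fin n → ℂ) (j k : Fin n) : ℂ :=
  fderiv ℂ (fun w => pder f w k) z (Pi.single j 1)

def polydisk (n : ℕ) : Set (Fin n → ℂ) := {z | ∀ j, ‖z j‖ < 1}

/-- The class `𝓑_n(M)` of normalized holomorphic functions on the unit polydisk. -/
def memB (n : ℕ) (M : ℝ) (f : (Fin n → ℂ) → ℂ) : Prop :=
  (∀ z ∈ polydisk n, DifferentiableAt ℂ f z) ∧ f 0 = 0 ∧
    (∀ j : Fin n, pder f 0 j = 1) ∧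
    ∀ z ∈ polydisk n, ∑ l, ∑ j, ∑ k, ‖z l * pder2 f z j k‖ ≤ M

/-- The class `𝓑_{H_n^0}(M)` of normalized pluriharmonic mappings `f = h + conj ∘ g`. -/
def memBH (n : ℕ) (M : ℝ) (h g : (Fin n → ℂ) → ℂ) : Prop :=
  (∀ z ∈ polydisk n, DifferentiableAt ℂ h z) ∧ (∀ z ∈ polydisk n, DifferentiableAt ℂ g z) ∧
    h 0 = 0 ∧ g 0 = 0 ∧ (∀ j : Fin n, pder h 0 j = 1) ∧ (∀ j : Fin n, pder g 0 j = 0) ∧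
    ∀ z ∈ polydisk n, ∑ l, ∑ j, ∑ k,
      (‖z l * pder2 h z j k‖ + ‖z l * pder2 g z j k‖) ≤ M

/-!
On the `j`-th coordinate slice through `w`, the function
`ζ ↦ ζ (α ∂²h/∂z_j∂z_k + β ∂²g/∂z_j∂z_k)` is bounded by `M` on the unit disc, so by the Schwarz
lemma (with unimodular `α, β` chosen to align the two terms) `|∂²h/∂z_j∂z_k| + |∂²g/∂z_j∂z_k| ≤ M`
on the whole polydisk. The gradient of `α ∂h/∂z_k + β ∂g/∂z_k` therefore has `ℓ¹`-norm at most
`n M`, and the mean value inequality on `[0, z]` gives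
`|∂h/∂z_k(z) - 1| + |∂g/∂z_k(z)| ≤ n M ‖z‖_∞`, from which both estimates follow.

The regularity this needs, that partial derivatives of a holomorphic function of several variables
are again holomorphic, comes from the one-variable Cauchy formula for the derivative along complex
lines, differentiated under the integral sign.
-/

open Metric Set

section Regularity

variable {E F : Type*} [NormedAddCommGroup E] [NormedSpace ℂ E] [NormedAddCommGroup F]
  [NormedSpace ℂ F] {f : E → F} {U : Set E}

theorem DifferentiableOn.exists_ball_norm_fderiv_le (hf : DifferentiableOn ℂ f U)
    (hU : IsOpen U) {x : E} (hx : x ∈ U) :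
    ∃ r > 0, ball x r ⊆ U ∧ ∃ C, ∀ y ∈ ball x r, ‖fderiv ℂ f y‖ ≤ C := by
  obtain ⟨R, hR, hRU⟩ := isOpen_iff.1 hU x hx
  obtain ⟨δ, hδ, hfδ⟩ :=
    Metric.continuousAt_iff.1 (hf.continuousOn.continuousAt (hU.mem_nhds hx)) 1 one_pos
  set r := min R δ / 2 with hr_def
  have hr : 0 < r := by positivity
  have hball : ∀ y ∈ ball x r, ball y r ⊆ ball x (min R δ) := fun y hy =>
    ball_subset_ball' (by rw [mem_ball] at hy; linarith)
  refine ⟨r, hr, (ball_subset_ball (by linarith [min_le_left R δ])).trans hRU, 2 / r,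
    fun y hy => ?_⟩
  have hsub : ball y r ⊆ ball x R := (hball y hy).trans (ball_subset_ball (min_le_left R δ))
  refine Complex.norm_fderiv_le_div_of_mapsTo_ball (hf.mono (hsub.trans hRU)) (fun p hp => ?_) hr
  have hp' := hfδ (ball_subset_ball (min_le_right R δ) (hball y hy hp))
  have hy' := hfδ (ball_subset_ball (min_le_right R δ) (hball y hy (mem_ball_self hr)))
  rw [mem_closedBall]
  linarith [dist_triangle_right (f p) (f y) (f x)]

theorem DifferentiableOn.fderiv_apply_eq_cderiv [CompleteSpace F] (hf : DifferentiableOn ℂ f U)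
    (hU : IsOpen U) {x v : E} {ρ : ℝ} (hρ : 0 < ρ)
    (hxv : ∀ ζ ∈ closedBall (0 : ℂ) ρ, x + ζ • v ∈ U) :
    fderiv ℂ f x v = cderiv ρ (fun ζ => f (x + ζ • v)) 0 := by
  have hline : ∀ ζ : ℂ, HasDerivAt (fun ζ : ℂ => x + ζ • v) v ζ := fun ζ => by
    simpa using ((hasDerivAt_id ζ).smul_const v).const_add x
  have hV : IsOpen ((fun ζ : ℂ => x + ζ • v) ⁻¹' U) := hU.preimage (by fun_prop)
  have hd : DifferentiableOn ℂ (fun ζ => f (x + ζ • v)) ((fun ζ : ℂ => x + ζ • v) ⁻¹' U) :=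
    hf.comp (fun ζ _ => (hline ζ).differentiableAt.differentiableWithinAt) fun _ h => h
  rw [cderiv_eq_deriv hV hd hρ hxv]
  have hx : x + (0 : ℂ) • v ∈ U := hxv 0 (mem_closedBall_self hρ.le)
  have := (hf.differentiableAt (hU.mem_nhds hx)).hasFDerivAt.comp_hasDerivAt (0 : ℂ) (hline 0)
  simp only [zero_smul, add_zero] at this
  exact this.deriv.symm

theorem differentiableAt_cderiv_comp_add_smul [FiniteDimensional ℂ E] [FiniteDimensional ℂ F]
    {w₀ v : E} {ρ r C : ℝ} (hρ : 0 < ρ) (hr : 0 < r)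
    (hf : ∀ x ∈ ball w₀ r, ∀ ζ ∈ sphere (0 : ℂ) ρ, DifferentiableAt ℂ f (x + ζ • v))
    (hC : ∀ x ∈ ball w₀ r, ∀ ζ ∈ sphere (0 : ℂ) ρ, ‖fderiv ℂ f (x + ζ • v)‖ ≤ C) :
    DifferentiableAt ℂ (fun x => cderiv ρ (fun ζ => f (x + ζ • v)) 0) w₀ := by
  borelize E
  have hγ : ∀ θ, circleMap 0 ρ θ ∈ sphere (0 : ℂ) ρ := circleMap_mem_sphere 0 hρ.le
  have hγ0 : ∀ θ, circleMap 0 ρ θ ≠ 0 := fun θ => circleMap_ne_center hρ.ne'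
  -- `cderiv ρ g 0` is `(2πi)⁻¹ ∫₀^{2π} k θ • g (circleMap 0 ρ θ) dθ`
  set k : ℝ → ℂ := fun θ => circleMap 0 ρ θ * I * ((circleMap 0 ρ θ - 0) ^ 2)⁻¹
  have hk_norm : ∀ θ, ‖k θ‖ = ρ⁻¹ := fun θ => by
    simp only [k, sub_zero, norm_mul, norm_circleMap_zero, abs_of_pos hρ, norm_I, mul_one,
      norm_inv, norm_pow]
    field_simp
  have hk : Continuous k := by
    simp only [k, sub_zero]
    exact (continuous_circleMap 0 ρ).mul continuous_const |>.mul <|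
      ((continuous_circleMap 0 ρ).pow 2).inv₀ fun θ => pow_ne_zero 2 (hγ0 θ)
  have hpath : ∀ x, Continuous fun θ => x + circleMap 0 ρ θ • v := fun x => by fun_prop
  have hcont : ∀ x ∈ ball w₀ r, Continuous fun θ => f (x + circleMap 0 ρ θ • v) :=
    fun x hx => continuous_iff_continuousAt.2 fun θ =>
      ContinuousAt.comp (g := f) (hf x hx _ (hγ θ)).continuousAt (hpath x).continuousAt
  have hInt : HasFDerivAt (fun x => ∫ θ in (0 : ℝ)..2 * Real.pi, k θ • f (x + circleMap 0 ρ θ • v))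
      (∫ θ in (0 : ℝ)..2 * Real.pi, k θ • fderiv ℂ f (w₀ + circleMap 0 ρ θ • v)) w₀ := by
    refine intervalIntegral.hasFDerivAt_integral_of_dominated_of_fderiv_le
      (F := fun x θ => k θ • f (x + circleMap 0 ρ θ • v))
      (F' := fun x θ => k θ • fderiv ℂ f (x + circleMap 0 ρ θ • v))
      (bound := fun _ => ρ⁻¹ * C) (ball_mem_nhds w₀ hr) ?_ ?_ ?_ ?_ intervalIntegrable_const ?_
    · filter_upwards [ball_mem_nhds w₀ hr] with x hx
      exact (hk.smul (hcont x hx)).aestronglyMeasurable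
    · exact (hk.smul (hcont w₀ (mem_ball_self hr))).intervalIntegrable _ _
    · exact (hk.aestronglyMeasurable.smul
        ((measurable_fderiv ℂ f).comp (hpath w₀).measurable).aestronglyMeasurable)
    · refine Filter.Eventually.of_forall fun θ _ x hx => ?_
      rw [norm_smul, hk_norm]
      exact mul_le_mul_of_nonneg_left (hC x hx _ (hγ θ)) (by positivity)
    · refine Filter.Eventually.of_forall fun θ _ x hx => ?_
      exact ((hf x hx _ (hγ θ)).hasFDerivAt.comp x ((hasFDerivAt_id x).add_const _)).const_smul
        (k θ)
  simp only [cderiv, circleIntegral, deriv_circleMap, smul_smul]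
  exact hInt.differentiableAt.const_smul _

theorem DifferentiableOn.differentiableOn_fderiv_apply [FiniteDimensional ℂ E]
    [FiniteDimensional ℂ F] (hf : DifferentiableOn ℂ f U) (hU : IsOpen U) (v : E) :
    DifferentiableOn ℂ (fun x => fderiv ℂ f x v) U := by
  intro w₀ hw₀
  obtain ⟨r, hr, hrU, C, hC⟩ := hf.exists_ball_norm_fderiv_le hU hw₀
  set ρ := r / (2 * (‖v‖ + 1))
  have hρ : 0 < ρ := by positivity
  have hline : ∀ x ∈ ball w₀ (r / 2), ∀ ζ ∈ closedBall (0 : ℂ) ρ, x + ζ • v ∈ ball w₀ r := by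
    intro x hx ζ hζ
    have hζv : ‖ζ • v‖ < r / 2 := by
      rw [norm_smul]
      calc ‖ζ‖ * ‖v‖ ≤ ρ * ‖v‖ := by gcongr; simpa using hζ
        _ < ρ * (‖v‖ + 1) := by gcongr; linarith
        _ = r / 2 := by simp only [ρ]; field_simp
    rw [mem_ball, dist_eq_norm, add_sub_right_comm]
    linarith [norm_add_le (x - w₀) (ζ • v), mem_ball_iff_norm.1 hx]
  have hcderiv : DifferentiableAt ℂ (fun x => cderiv ρ (fun ζ => f (x + ζ • v)) 0) w₀ :=
    differentiableAt_cderiv_comp_add_smul hρ (half_pos hr)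
      (fun x hx ζ hζ => hf.differentiableAt
        (hU.mem_nhds (hrU (hline x hx ζ (sphere_subset_closedBall hζ)))))
      (fun x hx ζ hζ => hC _ (hline x hx ζ (sphere_subset_closedBall hζ)))
  refine (hcderiv.congr_of_eventuallyEq ?_).differentiableWithinAt
  filter_upwards [ball_mem_nhds w₀ (half_pos hr)] with x hx
  exact hf.fderiv_apply_eq_cderiv hU hρ fun ζ hζ => hrU (hline x hx ζ hζ)

end Regularity

theorem norm_le_div_of_norm_sub_smul_le {E : Type*} [NormedAddCommGroup E] [NormedSpace ℂ E]
    {W : ℂ → E} {c ζ : ℂ} {R M : ℝ} (hW : DifferentiableOn ℂ W (ball c R))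
    (hM : ∀ ξ ∈ ball c R, ‖(ξ - c) • W ξ‖ ≤ M) (hζ : ζ ∈ ball c R) :
    ‖W ζ‖ ≤ M / R := by
  have hd : DifferentiableOn ℂ (fun ξ => (ξ - c) • W ξ) (ball c R) :=
    ((differentiableOn_id.sub_const c).smul hW)
  have hmaps : MapsTo (fun ξ => (ξ - c) • W ξ) (ball c R) (closedBall ((c - c) • W c) M) :=
    fun ξ hξ => by simpa using hM ξ hξ
  have := Complex.norm_dslope_le_div_of_mapsTo_ball hd hmaps hζ
  rcases eq_or_ne ζ c with rfl | hne
  · have hderiv : HasDerivAt (fun ξ => (ξ - ζ) • W ξ) (W ζ) ζ := by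
      simpa using ((hasDerivAt_id ζ).sub_const ζ).fun_smul
        (hW.differentiableAt (isOpen_ball.mem_nhds hζ)).hasDerivAt
    rwa [dslope_same, hderiv.deriv] at this
  · rwa [dslope_sub_smul_of_ne _ hne] at this

theorem Complex.exists_norm_eq_one_mul_add_mul_eq (a b : ℂ) :
    ∃ α β : ℂ, ‖α‖ = 1 ∧ ‖β‖ = 1 ∧ ‖α * a + β * b‖ = ‖a‖ + ‖b‖ := by
  refine ⟨exp (-(arg a * I)), exp (-(arg b * I)), by simpa using norm_exp_ofReal_mul_I (-arg a),
    by simpa using norm_exp_ofReal_mul_I (-arg b), ?_⟩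
  have hrot : ∀ z : ℂ, exp (-(arg z * I)) * z = ‖z‖ := fun z => by
    calc exp (-(arg z * I)) * z = exp (-(arg z * I)) * (‖z‖ * exp (arg z * I)) := by
          rw [norm_mul_exp_arg_mul_I]
      _ = ‖z‖ := by rw [mul_left_comm, ← exp_add, neg_add_cancel, exp_zero, mul_one]
  rw [hrot, hrot, ← ofReal_add, norm_real, Real.norm_of_nonneg (by positivity)]

theorem norm_le_sum_norm_apply_single {ι 𝕜 F : Type*} [Fintype ι] [DecidableEq ι]
    [NontriviallyNormedField 𝕜] [NormedAddCommGroup F] [NormedSpace 𝕜 F]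
    (L : (ι → 𝕜) →L[𝕜] F) : ‖L‖ ≤ ∑ i, ‖L (Pi.single i 1)‖ := by
  refine L.opNorm_le_bound (by positivity) fun x => ?_
  have hx : L x = ∑ i, x i • L (Pi.single i 1) := by
    conv_lhs => rw [← Finset.univ_sum_single x]
    refine (map_sum L _ _).trans (Finset.sum_congr rfl fun i _ => ?_)
    rw [← map_smul, ← Pi.single_smul, smul_eq_mul, mul_one]
  calc ‖L x‖ = ‖∑ i, x i • L (Pi.single i 1)‖ := by rw [hx]
    _ ≤ ∑ i, ‖x i‖ * ‖L (Pi.single i 1)‖ := (norm_sum_le _ _).trans_eq (by simp [norm_smul])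
    _ ≤ ∑ i, ‖x‖ * ‖L (Pi.single i 1)‖ := by gcongr with i; exact norm_le_pi_norm x i
    _ = (∑ i, ‖L (Pi.single i 1)‖) * ‖x‖ := by rw [← Finset.mul_sum, mul_comm]

theorem single_le_sum_sum_sum {ι κ μ : Type*} [Fintype ι] [Fintype κ] [Fintype μ]
    {f : ι → κ → μ → ℝ} (hf : ∀ a b c, 0 ≤ f a b c) (a : ι) (b : κ) (c : μ) :
    f a b c ≤ ∑ l, ∑ j, ∑ k, f l j k :=
  calc f a b c ≤ ∑ k, f a b k := single_le_sum (fun k _ => hf a b k) (mem_univ c)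
    _ ≤ ∑ j, ∑ k, f a j k :=
      single_le_sum (f := fun j => ∑ k, f a j k) (fun j _ => sum_nonneg fun k _ => hf a j k)
        (mem_univ b)
    _ ≤ ∑ l, ∑ j, ∑ k, f l j k :=
      single_le_sum (f := fun l => ∑ j, ∑ k, f l j k)
        (fun l _ => sum_nonneg fun j _ => sum_nonneg fun k _ => hf l j k) (mem_univ a)

theorem polydisk_eq_ball (n : ℕ) : polydisk n = ball 0 1 := by
  ext z
  simp [polydisk, pi_norm_lt_iff zero_lt_one]

theorem isOpen_polydisk (n : ℕ) : IsOpen (polydisk n) :=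
  polydisk_eq_ball n ▸ isOpen_ball

theorem convex_polydisk (n : ℕ) : Convex ℝ (polydisk n) :=
  polydisk_eq_ball n ▸ convex_ball 0 1

theorem zero_mem_polydisk (n : ℕ) : (0 : Fin n → ℂ) ∈ polydisk n := fun _ => by simp

theorem update_mem_polydisk {n : ℕ} {w : Fin n → ℂ} (hw : w ∈ polydisk n) (j : Fin n) {ζ : ℂ}
    (hζ : ‖ζ‖ < 1) : Function.update w j ζ ∈ polydisk n := by
  intro i
  rcases eq_or_ne i j with rfl | hij
  · simpa using hζ
  · simpa [hij] using hw i

theorem pder_const_mul_add_const_mul {n : ℕ} {F G : (Fin n → ℂ) → ℂ} {w : Fin n → ℂ}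
    (hF : DifferentiableAt ℂ F w) (hG : DifferentiableAt ℂ G w) (α β : ℂ) (j : Fin n) :
    pder (fun w => α * F w + β * G w) w j = α * pder F w j + β * pder G w j := by
  have := (hF.hasFDerivAt.const_mul α).fun_add (hG.hasFDerivAt.const_mul β)
  simp only [pder, this.fderiv]
  simp

theorem norm_pder_add_norm_pder_le_of_norm_mul_pder_le {n : ℕ} {F G : (Fin n → ℂ) → ℂ} {M : ℝ}
    (hF : DifferentiableOn ℂ F (polydisk n)) (hG : DifferentiableOn ℂ G (polydisk n))
    (hM : ∀ w ∈ polydisk n, ∀ j, ‖w j * pder F w j‖ + ‖w j * pder G w j‖ ≤ M)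
    {w : Fin n → ℂ} (hw : w ∈ polydisk n) (j : Fin n) :
    ‖pder F w j‖ + ‖pder G w j‖ ≤ M := by
  have hU := isOpen_polydisk n
  obtain ⟨α, β, hα, hβ, hαβ⟩ := exists_norm_eq_one_mul_add_mul_eq (pder F w j) (pder G w j)
  have hlin : ∀ u ∈ polydisk n,
      pder (fun w => α * F w + β * G w) u j = α * pder F u j + β * pder G u j := fun u hu =>
    pder_const_mul_add_const_mul (hF.differentiableAt (hU.mem_nhds hu))
      (hG.differentiableAt (hU.mem_nhds hu)) α β j
  have hd : DifferentiableOn ℂ (fun u => pder (fun w => α * F w + β * G w) u j) (polydisk n) :=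
    ((hF.const_mul α).add (hG.const_mul β)).differentiableOn_fderiv_apply hU _
  set W : ℂ → ℂ := fun ζ => pder (fun w => α * F w + β * G w) (Function.update w j ζ) j
  have hW : DifferentiableOn ℂ W (ball 0 1) :=
    hd.comp (fun ζ _ => (hasFDerivAt_update w ζ).differentiableAt.differentiableWithinAt)
      fun ζ hζ => update_mem_polydisk hw j (mem_ball_zero_iff.1 hζ)
  have hWM : ∀ ζ ∈ ball (0 : ℂ) 1, ‖(ζ - 0) • W ζ‖ ≤ M := by
    intro ζ hζ
    set u := Function.update w j ζ
    have hu : u ∈ polydisk n := update_mem_polydisk hw j (mem_ball_zero_iff.1 hζ)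
    have huj : u j = ζ := Function.update_self j ζ w
    calc ‖(ζ - 0) • W ζ‖ = ‖ζ * (α * pder F u j + β * pder G u j)‖ := by
          rw [sub_zero, smul_eq_mul, ← hlin u hu]
      _ = ‖α * (ζ * pder F u j) + β * (ζ * pder G u j)‖ := by ring_nf
      _ ≤ ‖ζ * pder F u j‖ + ‖ζ * pder G u j‖ :=
        (norm_add_le _ _).trans_eq (by simp [hα, hβ])
      _ ≤ M := huj ▸ hM u hu j
  have := norm_le_div_of_norm_sub_smul_le hW hWM (mem_ball_zero_iff.2 (hw j))
  simpa only [W, Function.update_eq_self, hlin w hw, hαβ, div_one] using this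

theorem norm_sub_add_norm_sub_le_of_norm_pder_le {n : ℕ} {F G : (Fin n → ℂ) → ℂ} {M : ℝ}
    (hF : DifferentiableOn ℂ F (polydisk n)) (hG : DifferentiableOn ℂ G (polydisk n))
    (hM : ∀ w ∈ polydisk n, ∀ j, ‖pder F w j‖ + ‖pder G w j‖ ≤ M)
    {z : Fin n → ℂ} (hz : z ∈ polydisk n) :
    ‖F z - F 0‖ + ‖G z - G 0‖ ≤ n * M * ‖z‖ := by
  have hU := isOpen_polydisk n
  obtain ⟨α, β, hα, hβ, hαβ⟩ := exists_norm_eq_one_mul_add_mul_eq (F z - F 0) (G z - G 0)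
  set Φ := fun w => α * F w + β * G w
  have hΦ : DifferentiableOn ℂ Φ (polydisk n) := (hF.const_mul α).add (hG.const_mul β)
  have hbound : ∀ w ∈ polydisk n, ‖fderiv ℂ Φ w‖ ≤ n * M := by
    intro w hw
    calc ‖fderiv ℂ Φ w‖ ≤ ∑ j, ‖pder Φ w j‖ := norm_le_sum_norm_apply_single _
      _ ≤ ∑ _j : Fin n, M := by
        gcongr with j
        rw [pder_const_mul_add_const_mul (hF.differentiableAt (hU.mem_nhds hw))
          (hG.differentiableAt (hU.mem_nhds hw))]
        exact (norm_add_le _ _).trans_eq (by simp [hα, hβ]) |>.trans (hM w hw j)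
      _ = n * M := by simp
  have := (convex_polydisk n).norm_image_sub_le_of_norm_fderiv_le
    (fun w hw => hΦ.differentiableAt (hU.mem_nhds hw)) hbound (zero_mem_polydisk n) hz
  calc ‖F z - F 0‖ + ‖G z - G 0‖ = ‖Φ z - Φ 0‖ := by
        rw [← hαβ]
        simp only [Φ]
        ring_nf
    _ ≤ n * M * ‖z - 0‖ := this
    _ = n * M * ‖z‖ := by rw [sub_zero]

theorem stmt_17_general {n : ℕ} (M : ℝ) (h g : (Fin n → ℂ) → ℂ)
    (hf : memBH n M h g) :
    ∀ z ∈ polydisk n, ∀ k : Fin n,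
      ‖pder h z k‖ + ‖pder g z k‖ ≤ 1 + (n : ℝ) * M * ‖z‖ ∧
        1 - (n : ℝ) * M * ‖z‖ ≤ ‖pder h z k‖ - ‖pder g z k‖ := by
  obtain ⟨hdh, hdg, -, -, hh1, hg0, hM⟩ := hf
  intro z hz k
  have hpder : ∀ f : (Fin n → ℂ) → ℂ, (∀ z ∈ polydisk n, DifferentiableAt ℂ f z) →
      DifferentiableOn ℂ (fun w => pder f w k) (polydisk n) := fun f hf =>
    DifferentiableOn.differentiableOn_fderiv_apply (fun z hz => (hf z hz).differentiableWithinAt)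
      (isOpen_polydisk n) _
  have hpder2 : ∀ w ∈ polydisk n, ∀ j, ‖pder2 h w j k‖ + ‖pder2 g w j k‖ ≤ M :=
    fun w hw => norm_pder_add_norm_pder_le_of_norm_mul_pder_le (hpder h hdh) (hpder g hdg)
      (fun u hu j => (single_le_sum_sum_sum (fun _ _ _ => by positivity) j j k).trans (hM u hu)) hw
  have hmvt := norm_sub_add_norm_sub_le_of_norm_pder_le (hpder h hdh) (hpder g hdg) hpder2 hz
  rw [hh1, hg0, sub_zero] at hmvt
  have h1 := norm_sub_norm_le (pder h z k) 1
  have h2 := norm_sub_norm_le 1 (pder h z k)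
  rw [norm_sub_rev] at h2
  rw [norm_one] at h1 h2
  constructor <;> linarith

/-- derivative estimates (2.18) from the proof of Theorem 2.8. -/
theorem stmt_17 {n : ℕ} (M : ℝ) (hM : 0 < M) (h g : (Fin n → ℂ) → ℂ)
    (hf : memBH n M h g) :
    ∀ z ∈ polydisk n, ∀ k : Fin n,
      ‖pder h z k‖ + ‖pder g z k‖ ≤ 1 + (n : ℝ) * M * ‖z‖ ∧
        1 - (n : ℝ) * M * ‖z‖ ≤ ‖pder h z k‖ - ‖pder g z k‖ :=
  stmt_17_general M h g hf
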